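/- arXiv:2605.27535 — 4 statements merged into one kernel-verified Lean document; each statement's English description precedes it below -/
import Mathlib

section
/- Let n be divisible by 4 and let M(X) ∈ F_{2^m}[X]/(X^n − 1) be any polynomial. Write M = M_even + M_odd, where M_even collects the terms of even degree and M_odd the terms of odd degree. Set B = M_even, B' = M_odd, C = B·M mod (X^n − 1), C' = B'·M mod (X^n − 1). Then: (i) b_j b'_j = 0 for all j; (ii) for every odd index j, c_j = c'_j; (iii) for every index j ≡ 0 (mod 4), c'_j = 0; (iv) for every index j ≡ 2 (mod 4), c_j = 0. Consequently c_j c'_j (c_j + c'_j) = 0 for all j. -/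
/-- Cyclic convolution of coefficient vectors, i.e. multiplication of the corresponding
polynomials in `F[X]/(X^n - 1)` (coefficients of the representative of degree `< n`). -/
def cconv {n : ℕ} {F : Type*} [Field F] (a b : Fin n → F) : Fin n → F :=
  fun j => ∑ i : Fin n, a i * b (j - i)

lemma sub_val_mod_two {n : ℕ} (h2 : 2 ∣ n) (i j : Fin n) :
    ((j - i : Fin n)).val % 2 = (j.val + i.val) % 2 := by
  rw [Fin.sub_def]
  rw [Nat.mod_mod_of_dvd _ h2]
  obtain ⟨k, rfl⟩ := h2
  have := i.2
  have := j.2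
  omega

lemma fixed_mod_four {n : ℕ} [NeZero n] (h4 : 4 ∣ n) {i j : Fin n} (h : j - i = i) :
    j.val % 4 = (i.val + i.val) % 4 := by
  have hj : j = i + i := sub_eq_iff_eq_add.mp h
  rw [hj, Fin.add_def, Nat.mod_mod_of_dvd _ h4]

theorem stmt10 (m n : ℕ) (hpos : 0 < n) (h4 : 4 ∣ n) (M : Fin n → GaloisField 2 m) :
    let B : Fin n → GaloisField 2 m := fun i => if i.val % 2 = 0 then M i else 0
    let B' : Fin n → GaloisField 2 m := fun i => if i.val % 2 = 1 then M i else 0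
    let C := cconv B M
    let C' := cconv B' M
    (∀ j : Fin n, B j * B' j = 0) ∧
    (∀ j : Fin n, j.val % 2 = 1 → C j = C' j) ∧
    (∀ j : Fin n, j.val % 4 = 0 → C' j = 0) ∧
    (∀ j : Fin n, j.val % 4 = 2 → C j = 0) ∧
    (∀ j : Fin n, C j * C' j * (C j + C' j) = 0) := by
  intro B B' C C'
  haveI : NeZero n := ⟨hpos.ne'⟩
  have h2 : 2 ∣ n := dvd_trans (by norm_num) h4
  have char2 : ∀ x : GaloisField 2 m, x + x = 0 := fun x => CharTwo.add_self_eq_zero x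
  have hBB' : ∀ j : Fin n, B j * B' j = 0 := by
    intro j
    by_cases hj : j.val % 2 = 0
    · simp [B, B', hj]
    · simp [B, B', hj]
  have hodd : ∀ j : Fin n, j.val % 2 = 1 → C j = C' j := by
    intro j hj
    show ∑ i : Fin n, B i * M (j - i) = ∑ i : Fin n, B' i * M (j - i)
    refine Fintype.sum_equiv (Equiv.subLeft j) _ _ ?_
    intro i
    simp only [Equiv.subLeft_apply]
    have hpar := sub_val_mod_two h2 i j
    have hsub : j - (j - i) = i := sub_sub_cancel j i
    rw [hsub]
    by_cases hi : i.val % 2 = 1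
    · have : (j - i).val % 2 = 0 := by omega
      simp [B, B', this, hi, mul_comm]
    · have : (j - i).val % 2 = 1 := by omega
      simp [B, B', this, hi, fun h => hi h, mul_comm]
  have h0 : ∀ j : Fin n, j.val % 4 = 0 → C' j = 0 := by
    intro j hj
    show ∑ i : Fin n, B' i * M (j - i) = 0
    refine Finset.sum_ninvolution (fun i => j - i) ?_ ?_ (fun i => Finset.mem_univ _) ?_
    · intro i
      have hsub : j - (j - i) = i := sub_sub_cancel j i
      have hpar := sub_val_mod_two h2 i j
      by_cases hi : i.val % 2 = 1
      · have h' : (j - i).val % 2 = 1 := by omega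
        simp only [B', hi, if_pos, h', hsub]
        rw [mul_comm]
        exact char2 _
      · have h' : ¬ (j - i).val % 2 = 1 := by omega
        simp [B', hi, h']
    · intro i hi hfix
      apply hi
      have := fixed_mod_four h4 hfix
      have hi2 : i.val % 2 = 1 := by
        by_contra h
        simp [B', h] at hi
      simp only [B', hi2, if_pos]
      omega
    · intro i; exact sub_sub_cancel j i
  have hc2 : ∀ j : Fin n, j.val % 4 = 2 → C j = 0 := by
    intro j hj
    show ∑ i : Fin n, B i * M (j - i) = 0
    refine Finset.sum_ninvolution (fun i => j - i) ?_ ?_ (fun i => Finset.mem_univ _) ?_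
    · intro i
      have hsub : j - (j - i) = i := sub_sub_cancel j i
      have hpar := sub_val_mod_two h2 i j
      by_cases hi : i.val % 2 = 0
      · have h' : (j - i).val % 2 = 0 := by omega
        simp only [B, hi, if_pos, h', hsub]
        rw [mul_comm]
        exact char2 _
      · have h' : ¬ (j - i).val % 2 = 0 := by omega
        simp [B, hi, h']
    · intro i hi hfix
      apply hi
      have := fixed_mod_four h4 hfix
      have hi2 : i.val % 2 = 0 := by
        by_contra h
        simp [B, h] at hi
      simp only [B, hi2, if_pos]
      omega
    · intro i; exact sub_sub_cancel j i
  refine ⟨hBB', hodd, h0, hc2, ?_⟩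
  intro j
  have h4lt : j.val % 4 = 0 ∨ j.val % 4 = 1 ∨ j.val % 4 = 2 ∨ j.val % 4 = 3 := by omega
  rcases h4lt with h|h|h|h
  · rw [h0 j h]; ring
  · have : j.val % 2 = 1 := by omega
    rw [hodd j this]; rw [char2]; ring
  · rw [hc2 j h]; ring
  · have : j.val % 2 = 1 := by omega
    rw [hodd j this]; rw [char2]; ring
end

section
/- Every circulant matrix M of order n over F_{2^m} with 4 | n admits a pair of related differentials: taking the input differences given by the even-indexed part and the odd-indexed part of the first-column polynomial of M, the resulting differentials (u, Mu) and (v, Mv) satisfy the related-differentials conditions. -/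
/-- `u` and `v` are related differences. -/
def RelDiff {n : ℕ} {F : Type*} [Field F] (u v : Fin n → F) : Prop :=
  ∀ i, u i * v i * (u i + v i) = 0

section aux

variable {n : ℕ}

lemma fin_sub_val_mod_two (h2 : 2 ∣ n) (i j : Fin n) :
    (i - j).val % 2 = (n - j.val + i.val) % 2 := by
  rw [Fin.sub_def]
  exact Nat.mod_mod_of_dvd _ h2

lemma fin_add_val_mod_four (h4 : 4 ∣ n) (i j : Fin n) :
    (i + j).val % 4 = (i.val + j.val) % 4 := by
  rw [Fin.add_def]
  exact Nat.mod_mod_of_dvd _ h4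

end aux

/-- Every circulant matrix of order `n` with `4 ∣ n` admits a pair of related
differentials, given by the even part and the odd part of the first column
(`Matrix.circulant x` has first column `x`). -/
theorem stmt11 (m n : ℕ) (hpos : 0 < n) (h4 : 4 ∣ n) (x : Fin n → GaloisField 2 m) :
    let M := Matrix.circulant x
    let u : Fin n → GaloisField 2 m := fun i => if i.val % 2 = 0 then x i else 0
    let v : Fin n → GaloisField 2 m := fun i => if i.val % 2 = 1 then x i else 0
    RelDiff u v ∧ RelDiff (M.mulVec u) (M.mulVec v) := by
  intro M u v
  haveI : NeZero n := ⟨hpos.ne'⟩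
  have h2 : 2 ∣ n := dvd_trans (by norm_num) h4
  constructor
  · intro i
    rcases Nat.mod_two_eq_zero_or_one i.val with h | h <;> simp [u, v, h]
  · intro i
    have hmu : M.mulVec u i = ∑ j, x (i - j) * u j := by
      simp [M, Matrix.mulVec, Matrix.circulant_apply, dotProduct]
    have hmv : M.mulVec v i = ∑ j, x (i - j) * v j := by
      simp [M, Matrix.mulVec, Matrix.circulant_apply, dotProduct]
    rcases Nat.mod_two_eq_zero_or_one i.val with hi | hi
    · -- i even: one of the two sums is zero
      have key : M.mulVec u i = 0 ∨ M.mulVec v i = 0 := by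
        have hi4 : i.val % 4 = 0 ∨ i.val % 4 = 2 := by omega
        rcases hi4 with hi4 | hi4
        · right
          rw [hmv]
          refine Finset.sum_ninvolution (fun j => i - j) ?_ ?_ (fun j => Finset.mem_univ _) ?_
          · intro j
            have hsub : i - (i - j) = j := sub_sub_cancel i j
            rw [hsub]
            rcases Nat.mod_two_eq_zero_or_one j.val with hj | hj
            · have hij : (i - j).val % 2 = 1 → False := by
                have := fin_sub_val_mod_two h2 i j
                have hjn : j.val < n := j.isLt
                omega
              simp only [v]
              rw [if_neg (by omega), if_neg hij]
              simp
            · have hij : (i - j).val % 2 = 1 := by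
                have := fin_sub_val_mod_two h2 i j
                have hjn : j.val < n := j.isLt
                omega
              simp only [v]
              rw [if_pos hj, if_pos hij]
              ring_nf
              have h20 : (2 : GaloisField 2 m) = 0 := CharTwo.two_eq_zero
              rw [h20, mul_zero]
          · intro j hfj heq
            have hj : j.val % 2 = 1 := by
              by_contra hj
              simp only [v] at hfj
              rw [if_neg hj] at hfj
              simp at hfj
            have hij : i = j + j := by
              have := sub_eq_iff_eq_add.mp heq
              rw [this]
            have := fin_add_val_mod_four h4 j j
            rw [hij] at hi4
            omega
          · intro j
            exact sub_sub_cancel i j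
        · left
          rw [hmu]
          refine Finset.sum_ninvolution (fun j => i - j) ?_ ?_ (fun j => Finset.mem_univ _) ?_
          · intro j
            have hsub : i - (i - j) = j := sub_sub_cancel i j
            rw [hsub]
            rcases Nat.mod_two_eq_zero_or_one j.val with hj | hj
            · have hij : (i - j).val % 2 = 0 := by
                have := fin_sub_val_mod_two h2 i j
                have hjn : j.val < n := j.isLt
                omega
              simp only [u]
              rw [if_pos hj, if_pos hij]
              ring_nf
              have h20 : (2 : GaloisField 2 m) = 0 := CharTwo.two_eq_zero
              rw [h20, mul_zero]
            · have hij : (i - j).val % 2 = 0 → False := by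
                have := fin_sub_val_mod_two h2 i j
                have hjn : j.val < n := j.isLt
                omega
              simp only [u]
              rw [if_neg (by omega), if_neg hij]
              simp
          · intro j hfj heq
            have hj : j.val % 2 = 0 := by
              by_contra hj
              simp only [u] at hfj
              rw [if_neg hj] at hfj
              simp at hfj
            have hij : i = j + j := by
              have := sub_eq_iff_eq_add.mp heq
              rw [this]
            have := fin_add_val_mod_four h4 j j
            rw [hij] at hi4
            omega
          · intro j
            exact sub_sub_cancel i j
      rcases key with h | h <;> rw [h] <;> ring
    · -- i odd: the two entries are equal
      have key : M.mulVec u i = M.mulVec v i := by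
        rw [hmu, hmv]
        refine Fintype.sum_equiv (Equiv.subLeft i) _ _ ?_
        intro j
        simp only [Equiv.subLeft_apply]
        have hsub : i - (i - j) = j := sub_sub_cancel i j
        rw [hsub]
        rcases Nat.mod_two_eq_zero_or_one j.val with hj | hj
        · have hij : (i - j).val % 2 = 1 := by
            have := fin_sub_val_mod_two h2 i j
            have hjn : j.val < n := j.isLt
            omega
          simp only [u, v]
          rw [if_pos hj, if_pos hij]
          ring
        · have hij : (i - j).val % 2 = 1 → False := by
            have := fin_sub_val_mod_two h2 i j
            have hjn : j.val < n := j.isLt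
            omega
          simp only [u, v]
          rw [if_neg (by omega), if_neg hij]
          simp
      rw [key, CharTwo.add_self_eq_zero]
      ring
end

section
/- Let n be divisible by 3, and in R = F_{2^m}[X]/(X^n − 1) write M = M_0 + M_1 + M_2 where M_j collects terms of degree ≡ j (mod 3). Set B = M_0 + M_1, B' = M_0 + M_2, C = B·M, C' = B'·M in R. Then for every index j: if j ≡ 0 (mod 3), then c_j = c'_j; if j ≡ 1 (mod 3), then c_j = 0; if j ≡ 2 (mod 3), then c'_j = 0. Moreover b_j b'_j (b_j + b'_j) = 0 for all j. Hence (B, C) and (B', C') form related differentials. -/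
section Aux
variable {n : ℕ} [NeZero n] {F : Type*} [Field F] [CharP F 2]

lemma pair_sum_zero (M : Fin n → F) (j : Fin n) (S : Finset (Fin n))
    (hclosed : ∀ i ∈ S, j - i ∈ S) (hfix : ∀ i ∈ S, j - i ≠ i) :
    ∑ i ∈ S, M i * M (j - i) = 0 := by
  apply Finset.sum_involution (fun i _ => j - i)
  · intro a ha
    have h1 : j - (j - a) = a := sub_sub_cancel j a
    rw [h1, mul_comm]
    exact CharTwo.add_self_eq_zero _
  · intro a ha _
    exact hfix a ha
  · intro a ha; exact hclosed a ha
  · intro a ha; exact sub_sub_cancel j a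

lemma val_sub_mod (hn : 3 ∣ n) (j i : Fin n) :
    ((j - i).val + i.val) % 3 = j.val % 3 := by
  have h : (j - i) + i = j := sub_add_cancel j i
  have := congrArg Fin.val h
  rw [Fin.add_def] at this
  rw [← Nat.mod_mod_of_dvd _ hn, ← this, Nat.mod_mod_of_dvd _ hn]

end Aux

theorem stmt12 (m n : ℕ) (hpos : 0 < n) (h3 : 3 ∣ n) (M : Fin n → GaloisField 2 m) :
    -- B = M₀ + M₁ (terms of degree ≡ 0 or 1 mod 3), B' = M₀ + M₂ (degree ≡ 0 or 2 mod 3)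
    let B : Fin n → GaloisField 2 m := fun i => if i.val % 3 ≠ 2 then M i else 0
    let B' : Fin n → GaloisField 2 m := fun i => if i.val % 3 ≠ 1 then M i else 0
    let C := cconv B M
    let C' := cconv B' M
    (∀ j : Fin n, j.val % 3 = 0 → C j = C' j) ∧
    (∀ j : Fin n, j.val % 3 = 1 → C j = 0) ∧
    (∀ j : Fin n, j.val % 3 = 2 → C' j = 0) ∧
    (∀ j : Fin n, B j * B' j * (B j + B' j) = 0) ∧
    RelDiff B B' ∧ RelDiff C C' := by
  haveI : NeZero n := ⟨hpos.ne'⟩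
  intro B B' C C'
  have hsub := fun j i => val_sub_mod (n := n) h3 j i
  have h0 : ∀ j : Fin n, j.val % 3 = 0 → C j = C' j := by
    intro j hj
    have hsum : C j + C' j = 0 := by
      show (∑ i : Fin n, B i * M (j - i)) + ∑ i : Fin n, B' i * M (j - i) = 0
      rw [← Finset.sum_add_distrib]
      have : ∀ i : Fin n, B i * M (j - i) + B' i * M (j - i)
          = if i.val % 3 ≠ 0 then M i * M (j - i) else 0 := by
        intro i
        simp only [B, B']
        rcases (by omega : i.val % 3 = 0 ∨ i.val % 3 = 1 ∨ i.val % 3 = 2) with h | h | h <;>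
          simp [h, ← add_mul, CharTwo.add_self_eq_zero]
      simp_rw [this]
      rw [← Finset.sum_filter]
      apply pair_sum_zero
      · intro i hi
        simp only [Finset.mem_filter, Finset.mem_univ, true_and] at hi ⊢
        have := hsub j i
        omega
      · intro i hi heq
        simp only [Finset.mem_filter, Finset.mem_univ, true_and] at hi
        have h1 := hsub j i
        rw [heq] at h1
        omega
    have hsub' : C j - C' j = 0 := by rw [CharTwo.sub_eq_add]; exact hsum
    exact sub_eq_zero.mp hsub'
  have h1 : ∀ j : Fin n, j.val % 3 = 1 → C j = 0 := by
    intro j hj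
    show (∑ i : Fin n, B i * M (j - i)) = 0
    have : ∀ i : Fin n, B i * M (j - i)
        = if i.val % 3 ≠ 2 then M i * M (j - i) else 0 := by
      intro i; simp only [B, ite_mul, zero_mul]
    simp_rw [this]
    rw [← Finset.sum_filter]
    apply pair_sum_zero
    · intro i hi
      simp only [Finset.mem_filter, Finset.mem_univ, true_and] at hi ⊢
      have := hsub j i
      omega
    · intro i hi heq
      simp only [Finset.mem_filter, Finset.mem_univ, true_and] at hi
      have h1 := hsub j i
      rw [heq] at h1
      omega
  have h2 : ∀ j : Fin n, j.val % 3 = 2 → C' j = 0 := by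
    intro j hj
    show (∑ i : Fin n, B' i * M (j - i)) = 0
    have : ∀ i : Fin n, B' i * M (j - i)
        = if i.val % 3 ≠ 1 then M i * M (j - i) else 0 := by
      intro i; simp only [B', ite_mul, zero_mul]
    simp_rw [this]
    rw [← Finset.sum_filter]
    apply pair_sum_zero
    · intro i hi
      simp only [Finset.mem_filter, Finset.mem_univ, true_and] at hi ⊢
      have := hsub j i
      omega
    · intro i hi heq
      simp only [Finset.mem_filter, Finset.mem_univ, true_and] at hi
      have h1 := hsub j i
      rw [heq] at h1
      omega
  have hrel : ∀ j : Fin n, B j * B' j * (B j + B' j) = 0 := by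
    intro j
    simp only [B, B']
    rcases (by omega : j.val % 3 = 0 ∨ j.val % 3 = 1 ∨ j.val % 3 = 2) with h | h | h <;>
      simp [h, CharTwo.add_self_eq_zero]
  refine ⟨h0, h1, h2, hrel, hrel, ?_⟩
  intro j
  rcases (by omega : j.val % 3 = 0 ∨ j.val % 3 = 1 ∨ j.val % 3 = 2) with h | h | h
  · rw [h0 j h, CharTwo.add_self_eq_zero, mul_zero]
  · rw [h1 j h, zero_mul, zero_mul]
  · rw [h2 j h, mul_zero, zero_mul]
end

section
/- Let M be a 3×3 MDS matrix over F_{2^m} and let (u, v, t) with t = u + v be a related triplet such that (u, Mu) and (v, Mv) are related differentials. If wt(u) = wt(v) = 1 and wt(t) = 2, then a contradiction arises; i.e., no related-differential pair exists with input weights (1, 1, 2). -/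
/-!
A weight-one vector is mapped by an MDS matrix to a vector with no zero coordinate, since all
entries of `M` are nonzero. For two such vectors `a = M u`, `b = M v` the relation
`a i * b i * (a i + b i) = 0` forces `a + b = 0`, so `M (u + v) = 0`; as `M` is invertible,
`u + v = 0`, which has weight `0`, not `2`.
-/

open scoped Classical

/-- Hamming weight: number of nonzero coordinates. -/
noncomputable def wt {n : ℕ} {F : Type*} [Zero F] (u : Fin n → F) : ℕ :=
  (Finset.univ.filter fun i => u i ≠ 0).card

/-- A square matrix is MDS iff every square submatrix is nonsingular. -/
def IsMDS {n : ℕ} {F : Type*} [Field F] (M : Matrix (Fin n) (Fin n) F) : Prop :=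
  ∀ (k : ℕ) (r c : Fin k → Fin n), Function.Injective r → Function.Injective c →
    (M.submatrix r c).det ≠ 0

lemma wt_eq_zero_iff {n : ℕ} {F : Type*} [Zero F] {u : Fin n → F} : wt u = 0 ↔ u = 0 := by
  simp [wt, funext_iff]

lemma exists_eq_single_of_wt_eq_one {n : ℕ} {F : Type*} [Zero F] {u : Fin n → F}
    (hu : wt u = 1) : ∃ j, u j ≠ 0 ∧ u = Pi.single j (u j) := by
  obtain ⟨j, hj⟩ := Finset.card_eq_one.mp hu
  have hsupp : ∀ k, u k ≠ 0 ↔ k = j := fun k => by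
    simpa using congrArg (k ∈ ·) hj
  refine ⟨j, (hsupp j).mpr rfl, funext fun k => ?_⟩
  by_cases hk : k = j
  · subst hk; simp
  · simpa [hk] using mt (hsupp k).mp hk

lemma RelDiff.add_eq_zero {n : ℕ} {F : Type*} [Field F] {a b : Fin n → F} (hab : RelDiff a b)
    (ha : ∀ i, a i ≠ 0) (hb : ∀ i, b i ≠ 0) : a + b = 0 :=
  funext fun i => (mul_eq_zero.mp (hab i)).resolve_left (mul_ne_zero (ha i) (hb i))

namespace IsMDS

variable {n : ℕ} {F : Type*} [Field F] {M : Matrix (Fin n) (Fin n) F}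

lemma apply_ne_zero (hM : IsMDS M) (i j : Fin n) : M i j ≠ 0 := by
  have h := hM 1 ![i] ![j] (Function.injective_of_subsingleton _)
    (Function.injective_of_subsingleton _)
  rwa [Matrix.det_fin_one] at h

lemma det_ne_zero (hM : IsMDS M) : M.det ≠ 0 := by
  simpa using hM n id id Function.injective_id Function.injective_id

lemma mulVec_injective (hM : IsMDS M) : Function.Injective M.mulVec :=
  Matrix.mulVec_injective_iff_isUnit.mpr <|
    (Matrix.isUnit_iff_isUnit_det M).mpr hM.det_ne_zero.isUnit

lemma mulVec_apply_ne_zero_of_wt_eq_one (hM : IsMDS M) {u : Fin n → F} (hu : wt u = 1)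
    (i : Fin n) : M.mulVec u i ≠ 0 := by
  obtain ⟨j, huj, hsingle⟩ := exists_eq_single_of_wt_eq_one hu
  rw [hsingle, Matrix.mulVec_single]
  simpa using mul_ne_zero (hM.apply_ne_zero i j) huj

end IsMDS

theorem stmt18_general (m : ℕ) (M : Matrix (Fin 3) (Fin 3) (GaloisField 2 m)) (hMDS : IsMDS M)
    (u v : Fin 3 → GaloisField 2 m)
    (h2 : RelDiff (M.mulVec u) (M.mulVec v))
    (hu : wt u = 1) (hv : wt v = 1) (ht : wt (u + v) = 2) : False := by
  have hMsum : M.mulVec u + M.mulVec v = 0 :=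
    h2.add_eq_zero (hMDS.mulVec_apply_ne_zero_of_wt_eq_one hu)
      (hMDS.mulVec_apply_ne_zero_of_wt_eq_one hv)
  have hsum : u + v = 0 :=
    hMDS.mulVec_injective (by rw [Matrix.mulVec_add, hMsum, Matrix.mulVec_zero])
  simp [wt_eq_zero_iff.mpr hsum] at ht

/-- For a `3 × 3` MDS matrix there is no related-differential pair with input weights
`(1, 1, 2)`. -/
theorem stmt18 (m : ℕ) (M : Matrix (Fin 3) (Fin 3) (GaloisField 2 m)) (hMDS : IsMDS M)
    (u v : Fin 3 → GaloisField 2 m)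
    (h1 : RelDiff u v) (h2 : RelDiff (M.mulVec u) (M.mulVec v))
    (hu : wt u = 1) (hv : wt v = 1) (ht : wt (u + v) = 2) : False :=
  stmt18_general m M hMDS u v h2 hu hv ht
end
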